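/- (Attenuation of MUV-based correlations.) Under the latent factor model z = A x + ε with E[x] = 0, cov(x) = Σ = (σ_{lk}), E[ε] = 0, cov(ε) = Γ = diag(γ₁,…,γ_q) with all γ_j ≥ 0, x uncorrelated with ε, and all entries square-integrable, let S_l = {j : the j-th row of A equals the l-th standard basis vector of ℝ^p}, assume |S_l| ≥ 1 and σ_{ll} > 0 for all l, and define m_l = |S_l|^{-1} Σ_{j ∈ S_l} z_j. Then for all l ≠ k, |Corr(m_l, m_k)| ≤ |r_{lk}|, where r_{lk} = σ_{lk}/√(σ_{ll} σ_{kk}); moreover, the inequality is strict whenever σ_{lk} ≠ 0 and Σ_{j ∈ S_l} γ_j > 0. -/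

import Mathlib

/-!
Every unique variable of `l` is `z_j = x_l + ε_j`, so `m_l = x_l + |S_l|⁻¹ ∑_{j ∈ S_l} ε_j`.
As the noise is uncorrelated with the factors and across indices, and `S_l ∩ S_k = ∅` for
`l ≠ k`, the noise leaves `Cov(m_l, m_k) = σ_{lk}` unchanged but inflates the variances to
`Var(m_l) = σ_{ll} + |S_l|⁻² ∑_{j ∈ S_l} γ_j`: only the denominator of the correlation grows.
-/

open Matrix Finset MeasureTheory

noncomputable section

open scoped Classical in
/-- The set of unique lower-level variables of the `l`-th higher-level variable:
indices `j` whose row of `A` equals the `l`-th standard basis vector. -/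
noncomputable def uniqueSet {q p : ℕ} (A : Matrix (Fin q) (Fin p) ℝ) (l : Fin p) :
    Finset (Fin q) :=
  Finset.univ.filter fun j => ∀ k, A j k = if k = l then 1 else 0

open ProbabilityTheory

lemma abs_div_sqrt_le_of_le {a u u' : ℝ} (hu : 0 < u) (h : u ≤ u') :
    |a / √u'| ≤ |a / √u| := by
  rw [abs_div, abs_div, abs_of_nonneg (Real.sqrt_nonneg _), abs_of_nonneg (Real.sqrt_nonneg _)]
  exact div_le_div_of_nonneg_left (abs_nonneg a) (Real.sqrt_pos.mpr hu) (Real.sqrt_le_sqrt h)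

lemma abs_div_sqrt_lt_of_lt {a u u' : ℝ} (ha : a ≠ 0) (hu : 0 < u) (h : u < u') :
    |a / √u'| < |a / √u| := by
  rw [abs_div, abs_div, abs_of_nonneg (Real.sqrt_nonneg _), abs_of_nonneg (Real.sqrt_nonneg _)]
  exact div_lt_div_of_pos_left (abs_pos.mpr ha) (Real.sqrt_pos.mpr hu) (Real.sqrt_lt_sqrt hu.le h)

lemma abs_div_sqrt_add_mul_add_le {a v w g h : ℝ} (hv : 0 < v) (hw : 0 < w) (hg : 0 ≤ g)
    (hh : 0 ≤ h) : |a / √((v + g) * (w + h))| ≤ |a / √(v * w)| :=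
  abs_div_sqrt_le_of_le (mul_pos hv hw)
    (mul_le_mul (le_add_of_nonneg_right hg) (le_add_of_nonneg_right hh) hw.le (by linarith))

lemma abs_div_sqrt_add_mul_add_lt {a v w g h : ℝ} (ha : a ≠ 0) (hv : 0 < v) (hw : 0 < w)
    (hg : 0 < g) (hh : 0 ≤ h) : |a / √((v + g) * (w + h))| < |a / √(v * w)| :=
  abs_div_sqrt_lt_of_lt ha (mul_pos hv hw)
    (mul_lt_mul (lt_add_of_pos_right v hg) (le_add_of_nonneg_right hh) hw (by linarith))

lemma covariance_eq_integral_mul {Ω : Type*} [MeasurableSpace Ω] {μ : Measure Ω}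
    {X Y : Ω → ℝ} (hX : μ[X] = 0) (hY : μ[Y] = 0) :
    cov[X, Y; μ] = ∫ ω, X ω * Y ω ∂μ := by
  simp [covariance, hX, hY]

section UniqueSet

variable {q p : ℕ} {A : Matrix (Fin q) (Fin p) ℝ}

lemma sum_mul_eq_of_mem_uniqueSet {l : Fin p} {j : Fin q} (hj : j ∈ uniqueSet A l)
    (v : Fin p → ℝ) : ∑ k, A j k * v k = v l := by
  classical
  simp [(mem_filter.mp hj).2]

lemma disjoint_uniqueSet {l k : Fin p} (hlk : l ≠ k) :
    Disjoint (uniqueSet A l) (uniqueSet A k) := by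
  classical
  refine disjoint_left.mpr fun j hjl hjk => ?_
  have h1 := (mem_filter.mp hjl).2 l
  have h2 := (mem_filter.mp hjk).2 l
  simp_all

def muv {Ω : Type*} (A : Matrix (Fin q) (Fin p) ℝ) (z : Ω → Fin q → ℝ) (l : Fin p) (ω : Ω) :
    ℝ :=
  ((uniqueSet A l).card : ℝ)⁻¹ * ∑ j ∈ uniqueSet A l, z ω j

end UniqueSet

/-- Second-moment assumptions of the latent factor model `z = A x + ε`. -/
structure IsLatentFactorModel {Ω : Type*} [MeasurableSpace Ω] (μ : Measure Ω) {q p : ℕ}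
    (x : Ω → Fin p → ℝ) (ε : Ω → Fin q → ℝ) (Sig : Matrix (Fin p) (Fin p) ℝ)
    (γ : Fin q → ℝ) : Prop where
  memLp_factor : ∀ l, MemLp (fun ω => x ω l) 2 μ
  memLp_noise : ∀ j, MemLp (fun ω => ε ω j) 2 μ
  integral_factor : ∀ l, ∫ ω, x ω l ∂μ = 0
  integral_noise : ∀ j, ∫ ω, ε ω j ∂μ = 0
  integral_factor_mul_factor : ∀ l k, ∫ ω, x ω l * x ω k ∂μ = Sig l k
  integral_noise_mul_noise : ∀ i j, ∫ ω, ε ω i * ε ω j ∂μ = if i = j then γ i else 0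
  integral_factor_mul_noise : ∀ l j, ∫ ω, x ω l * ε ω j ∂μ = 0

namespace IsLatentFactorModel

variable {Ω : Type*} [MeasurableSpace Ω] {μ : Measure Ω} [IsFiniteMeasure μ] {q p : ℕ}
  {x : Ω → Fin p → ℝ} {ε : Ω → Fin q → ℝ} {Sig : Matrix (Fin p) (Fin p) ℝ} {γ : Fin q → ℝ}

lemma covariance_factor_add_noise (hM : IsLatentFactorModel μ x ε Sig γ) (l k : Fin p) (i j : Fin q) :
    cov[fun ω => x ω l + ε ω i, fun ω => x ω k + ε ω j; μ] =
      Sig l k + if i = j then γ i else 0 := by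
  have hadd : ∀ l i, (fun ω => x ω l + ε ω i) = (fun ω => x ω l) + fun ω => ε ω i :=
    fun _ _ => rfl
  rw [hadd, hadd, covariance_add_left (hM.memLp_factor l) (hM.memLp_noise i)
      ((hM.memLp_factor k).add (hM.memLp_noise j)),
    covariance_add_right (hM.memLp_factor l) (hM.memLp_factor k) (hM.memLp_noise j),
    covariance_add_right (hM.memLp_noise i) (hM.memLp_factor k) (hM.memLp_noise j)]
  simp only [covariance_eq_integral_mul, hM.integral_factor, hM.integral_noise,
    hM.integral_factor_mul_factor, hM.integral_noise_mul_noise, hM.integral_factor_mul_noise,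
    mul_comm (ε _ i) (x _ k), add_zero, zero_add]

variable {A : Matrix (Fin q) (Fin p) ℝ} {z : Ω → Fin q → ℝ}

lemma covariance_muv (hM : IsLatentFactorModel μ x ε Sig γ)
    (hz : ∀ ω j, z ω j = (∑ k, A j k * x ω k) + ε ω j) {l k : Fin p}
    (hl : (uniqueSet A l).Nonempty) (hk : (uniqueSet A k).Nonempty) :
    cov[muv A z l, muv A z k; μ] = Sig l k + ((uniqueSet A l).card : ℝ)⁻¹ * ((uniqueSet A k).card : ℝ)⁻¹ *
        ∑ j ∈ uniqueSet A l ∩ uniqueSet A k, γ j := by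
  have hsum : ∀ l, (fun ω => ∑ j ∈ uniqueSet A l, z ω j) =
      fun ω => ∑ j ∈ uniqueSet A l, (x ω l + ε ω j) := fun l => funext fun ω =>
    sum_congr rfl fun j hj => by rw [hz, sum_mul_eq_of_mem_uniqueSet hj]
  have hmemLp : ∀ l, ∀ j ∈ uniqueSet A l, MemLp (fun ω => x ω l + ε ω j) 2 μ :=
    fun l j _ => (hM.memLp_factor l).add (hM.memLp_noise j)
  unfold muv
  rw [covariance_const_mul_left (X := fun ω => ∑ j ∈ uniqueSet A l, z ω j),
    covariance_const_mul_right (Y := fun ω => ∑ j ∈ uniqueSet A k, z ω j), hsum, hsum,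
    covariance_fun_sum_fun_sum' (hmemLp l) (hmemLp k)]
  simp only [hM.covariance_factor_add_noise, sum_add_distrib, sum_const, nsmul_eq_mul,
    sum_ite_eq]
  rw [← sum_filter, filter_mem_eq_inter]
  have hl0 : ((uniqueSet A l).card : ℝ) ≠ 0 := by exact_mod_cast hl.card_pos.ne'
  have hk0 : ((uniqueSet A k).card : ℝ) ≠ 0 := by exact_mod_cast hk.card_pos.ne'
  field_simp

lemma covariance_muv_of_ne (hM : IsLatentFactorModel μ x ε Sig γ)
    (hz : ∀ ω j, z ω j = (∑ k, A j k * x ω k) + ε ω j) {l k : Fin p} (hlk : l ≠ k)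
    (hl : (uniqueSet A l).Nonempty) (hk : (uniqueSet A k).Nonempty) :
    cov[muv A z l, muv A z k; μ] = Sig l k := by
  rw [hM.covariance_muv hz hl hk, disjoint_iff_inter_eq_empty.mp (disjoint_uniqueSet hlk),
    sum_empty, mul_zero, add_zero]

lemma variance_muv (hM : IsLatentFactorModel μ x ε Sig γ)
    (hz : ∀ ω j, z ω j = (∑ k, A j k * x ω k) + ε ω j) {l : Fin p}
    (hl : (uniqueSet A l).Nonempty) :
    cov[muv A z l, muv A z l; μ] = Sig l l + ((uniqueSet A l).card : ℝ)⁻¹ ^ 2 * ∑ j ∈ uniqueSet A l, γ j := by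
  rw [hM.covariance_muv hz hl hl, inter_self, sq]

end IsLatentFactorModel

theorem stmt16_general {Ω : Type*} [MeasurableSpace Ω] (μ : Measure Ω) [IsProbabilityMeasure μ]
    {q p : ℕ} (A : Matrix (Fin q) (Fin p) ℝ)
    (hcard : ∀ l, 1 ≤ (uniqueSet A l).card)
    (x : Ω → Fin p → ℝ) (ε : Ω → Fin q → ℝ)
    (Sig : Matrix (Fin p) (Fin p) ℝ)
    (hpos : ∀ l, 0 < Sig l l)
    (γ : Fin q → ℝ) (hγ : ∀ j, 0 ≤ γ j)
    (hxL2 : ∀ l, MemLp (fun ω => x ω l) 2 μ)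
    (hεL2 : ∀ j, MemLp (fun ω => ε ω j) 2 μ)
    (hx0 : ∀ l, ∫ ω, x ω l ∂μ = 0)
    (hε0 : ∀ j, ∫ ω, ε ω j ∂μ = 0)
    (hcovx : ∀ l k, ∫ ω, x ω l * x ω k ∂μ = Sig l k)
    (hcovε : ∀ i j, ∫ ω, ε ω i * ε ω j ∂μ = if i = j then γ i else 0)
    (huncorr : ∀ l j, ∫ ω, x ω l * ε ω j ∂μ = 0)
    (z : Ω → Fin q → ℝ) (hz : ∀ ω j, z ω j = (∑ k, A j k * x ω k) + ε ω j) :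
    let m : Fin p → Ω → ℝ :=
      fun l ω => ((uniqueSet A l).card : ℝ)⁻¹ * ∑ j ∈ uniqueSet A l, z ω j
    let cov : (Ω → ℝ) → (Ω → ℝ) → ℝ :=
      fun f g => ∫ ω, (f ω - ∫ ω', f ω' ∂μ) * (g ω - ∫ ω', g ω' ∂μ) ∂μ
    ∀ l k : Fin p, l ≠ k →
      (|cov (m l) (m k) / Real.sqrt (cov (m l) (m l) * cov (m k) (m k))| ≤
        |Sig l k / Real.sqrt (Sig l l * Sig k k)|) ∧
      (Sig l k ≠ 0 → 0 < ∑ j ∈ uniqueSet A l, γ j →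
        |cov (m l) (m k) / Real.sqrt (cov (m l) (m l) * cov (m k) (m k))| <
          |Sig l k / Real.sqrt (Sig l l * Sig k k)|) := by
  intro m cov l k hlk
  have hM : IsLatentFactorModel μ x ε Sig γ :=
    ⟨hxL2, hεL2, hx0, hε0, hcovx, hcovε, huncorr⟩
  have hS : ∀ l, (uniqueSet A l).Nonempty := fun l => card_pos.mp (hcard l)
  have hnoise : ∀ l, 0 ≤ ((uniqueSet A l).card : ℝ)⁻¹ ^ 2 * ∑ j ∈ uniqueSet A l, γ j :=
    fun l => mul_nonneg (sq_nonneg _) (sum_nonneg fun j _ => hγ j)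
  have hm : ∀ l k, cov (m l) (m k) = cov[muv A z l, muv A z k; μ] := fun _ _ => rfl
  simp only [hm]
  rw [hM.covariance_muv_of_ne hz hlk (hS l) (hS k), hM.variance_muv hz (hS l),
    hM.variance_muv hz (hS k)]
  refine ⟨abs_div_sqrt_add_mul_add_le (hpos l) (hpos k) (hnoise l) (hnoise k),
    fun hlk0 hγl => abs_div_sqrt_add_mul_add_lt hlk0 (hpos l) (hpos k) ?_ (hnoise k)⟩
  have hc : (0 : ℝ) < ((uniqueSet A l).card : ℝ)⁻¹ := inv_pos.mpr (by exact_mod_cast hcard l)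
  exact mul_pos (pow_pos hc 2) hγl

/-- attenuation of MUV-based correlations: under the latent factor model
`z = A x + ε` with mean-zero square-integrable `x`, `ε`, `cov(x) = Σ` with `σ_{ll} > 0`,
`cov(ε) = diag(γ₁,…,γ_q)` with `γ_j ≥ 0`, `x` uncorrelated with `ε`, and `|S_l| ≥ 1`,
the MUV aggregates `m_l = |S_l|⁻¹ ∑_{j ∈ S_l} z_j` satisfy
`|Corr(m_l, m_k)| ≤ |r_{lk}|` for `l ≠ k`, where `r_{lk} = σ_{lk}/√(σ_{ll}σ_{kk})`;
the inequality is strict whenever `σ_{lk} ≠ 0` and `∑_{j ∈ S_l} γ_j > 0`. -/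
theorem stmt16 {Ω : Type*} [MeasurableSpace Ω] (μ : Measure Ω) [IsProbabilityMeasure μ]
    {q p : ℕ} (A : Matrix (Fin q) (Fin p) ℝ) (hA : ∀ j k, A j k = 0 ∨ A j k = 1)
    (hcard : ∀ l, 1 ≤ (uniqueSet A l).card)
    (x : Ω → Fin p → ℝ) (ε : Ω → Fin q → ℝ)
    (Sig : Matrix (Fin p) (Fin p) ℝ) (hSig : Sig.IsSymm)
    (hpos : ∀ l, 0 < Sig l l)
    (γ : Fin q → ℝ) (hγ : ∀ j, 0 ≤ γ j)
    (hxL2 : ∀ l, MemLp (fun ω => x ω l) 2 μ)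
    (hεL2 : ∀ j, MemLp (fun ω => ε ω j) 2 μ)
    (hx0 : ∀ l, ∫ ω, x ω l ∂μ = 0)
    (hε0 : ∀ j, ∫ ω, ε ω j ∂μ = 0)
    (hcovx : ∀ l k, ∫ ω, x ω l * x ω k ∂μ = Sig l k)
    (hcovε : ∀ i j, ∫ ω, ε ω i * ε ω j ∂μ = if i = j then γ i else 0)
    (huncorr : ∀ l j, ∫ ω, x ω l * ε ω j ∂μ = 0)
    (z : Ω → Fin q → ℝ) (hz : ∀ ω j, z ω j = (∑ k, A j k * x ω k) + ε ω j) :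
    let m : Fin p → Ω → ℝ :=
      fun l ω => ((uniqueSet A l).card : ℝ)⁻¹ * ∑ j ∈ uniqueSet A l, z ω j
    let cov : (Ω → ℝ) → (Ω → ℝ) → ℝ :=
      fun f g => ∫ ω, (f ω - ∫ ω', f ω' ∂μ) * (g ω - ∫ ω', g ω' ∂μ) ∂μ
    ∀ l k : Fin p, l ≠ k →
      (|cov (m l) (m k) / Real.sqrt (cov (m l) (m l) * cov (m k) (m k))| ≤
        |Sig l k / Real.sqrt (Sig l l * Sig k k)|) ∧
      (Sig l k ≠ 0 → 0 < ∑ j ∈ uniqueSet A l, γ j →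
        |cov (m l) (m k) / Real.sqrt (cov (m l) (m l) * cov (m k) (m k))| <
          |Sig l k / Real.sqrt (Sig l l * Sig k k)|) :=
  stmt16_general μ A hcard x ε Sig hpos γ hγ hxL2 hεL2 hx0 hε0 hcovx hcovε huncorr z hz
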